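/- arXiv:2603.16396 — 2 statements merged into one kernel-verified Lean document; each statement's English description precedes it below -/
import Mathlib

section
/- For every integer n ≥ 3, the girth of the graph G_n equals 4 (i.e., the minimum length of a cycle in G_n, as an extended natural number, is 4). -/
open SimpleGraph

/-- The edge set of the Petersen graph on `Fin 10`, as a finset of unordered pairs. -/
def petersenEdges : Finset (Sym2 (Fin 10)) :=
  {s(0,1), s(1,2), s(2,3), s(3,4), s(0,4), s(0,5), s(1,6), s(2,7),
   s(3,8), s(4,9), s(5,7), s(7,9), s(6,9), s(6,8), s(5,8)}

/-- The fixed orientation `D` of the Petersen edges. -/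
def dirD : Finset (Fin 10 × Fin 10) :=
  {(0,1), (0,4), (0,5), (1,2), (1,6), (2,3), (2,7), (3,4),
   (3,8), (4,9), (5,7), (5,8), (6,8), (6,9), (7,9)}

lemma petersen_irrefl : ∀ x : Fin 10, s(x,x) ∉ petersenEdges := by decide

lemma dirD_irrefl : ∀ x : Fin 10, (x,x) ∉ dirD := by decide

/-- The graph `G n`: `n` copies of the Petersen graph, cross-wired by the `n`-cycle
according to the orientation `dirD`. -/
def G (n : ℕ) : SimpleGraph (ZMod n × Fin 10) where
  Adj p q :=
    (p.1 = q.1 ∧ s(p.2, q.2) ∈ petersenEdges) ∨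
    (q.1 = p.1 + 1 ∧ (p.2, q.2) ∈ dirD) ∨
    (p.1 = q.1 + 1 ∧ (q.2, p.2) ∈ dirD)
  symm := by
    refine ⟨?_⟩
    rintro ⟨i, x⟩ ⟨j, y⟩ (⟨h1, h2⟩ | ⟨h1, h2⟩ | ⟨h1, h2⟩)
    · exact Or.inl ⟨h1.symm, by rwa [Sym2.eq_swap]⟩
    · exact Or.inr (Or.inr ⟨h1, h2⟩)
    · exact Or.inr (Or.inl ⟨h1, h2⟩)
  loopless := by
    refine ⟨?_⟩
    rintro ⟨i, x⟩ (⟨_, h2⟩ | ⟨_, h2⟩ | ⟨_, h2⟩)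
    · exact petersen_irrefl x h2
    · exact dirD_irrefl x h2
    · exact dirD_irrefl x h2
/-!
Projecting to the `Fin 10` coordinate maps `G n` homomorphically onto the Petersen graph, which
is triangle-free, so `G n` has no triangles. Since `0 ≠ 1` in `ZMod n`, the vertices
`(0,0), (0,1), (1,2), (1,1)` form a 4-cycle: two Petersen edges joined by the rungs
`(1,2), (0,1) ∈ D` between layers `0` and `1`.
-/

namespace SimpleGraph

variable {α β : Type*} {G : SimpleGraph α} {H : SimpleGraph β}

theorem CliqueFree.of_hom (f : G →g H) {k : ℕ} (h : H.CliqueFree k) : G.CliqueFree k := by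
  rw [cliqueFree_iff] at h ⊢
  refine ⟨fun c ↦ h.false ⟨f.comp c.toHom, ?_⟩⟩
  exact Hom.injective_of_top_hom (f.comp c.toHom)

theorem four_le_egirth_of_cliqueFree_three (h : G.CliqueFree 3) : 4 ≤ G.egirth := by
  rw [le_egirth]
  intro a w hw
  have hne : w.length ≠ 3 := fun h3 ↦
    (is3Clique_iff_exists_cycle_length_three.2 ⟨a, w, hw, h3⟩).elim fun s hs ↦ h s hs
  have := hw.three_le_length
  exact_mod_cast (by omega : 4 ≤ w.length)

theorem egirth_le_four {a b c d : α} (hab : G.Adj a b) (hbc : G.Adj b c) (hcd : G.Adj c d)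
    (hda : G.Adj d a) (hac : a ≠ c) (hbd : b ≠ d) : G.egirth ≤ 4 := by
  let w : G.Walk a a := .cons hab (.cons hbc (.cons hcd (.cons hda .nil)))
  have hw : w.IsCycle := by
    simp [w, Walk.cons_isCycle_iff, hab.ne, hbc.ne, hcd.ne, hda.ne, hac, hbd, hab.ne.symm,
      hda.ne.symm, hac.symm]
  exact egirth_le_length hw

end SimpleGraph

def petersenGraph : SimpleGraph (Fin 10) := SimpleGraph.fromEdgeSet petersenEdges

theorem petersenGraph_cliqueFree_three : petersenGraph.CliqueFree 3 := by
  have hno : ∀ x y z : Fin 10, s(x, y) ∈ petersenEdges → s(x, z) ∈ petersenEdges →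
      s(y, z) ∉ petersenEdges := by decide
  intro s hs
  obtain ⟨x, y, z, hxy, hxz, hyz, -⟩ := is3Clique_iff.1 hs
  exact hno x y z hxy.1 hxz.1 hyz.1

theorem mem_petersenEdges_of_mem_dirD :
    ∀ x y : Fin 10, (x, y) ∈ dirD → s(x, y) ∈ petersenEdges := by
  decide

theorem G_adj_of_mem_petersenEdges {n : ℕ} (i : ZMod n) {x y : Fin 10}
    (h : s(x, y) ∈ petersenEdges) : (G n).Adj (i, x) (i, y) :=
  Or.inl ⟨rfl, h⟩

theorem G_adj_succ_of_mem_dirD {n : ℕ} (i : ZMod n) {x y : Fin 10} (h : (x, y) ∈ dirD) :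
    (G n).Adj (i, x) (i + 1, y) :=
  Or.inr (Or.inl ⟨rfl, h⟩)

theorem mem_petersenEdges_of_G_adj {n : ℕ} {p q : ZMod n × Fin 10} (h : (G n).Adj p q) :
    s(p.2, q.2) ∈ petersenEdges := by
  rcases h with ⟨-, h⟩ | ⟨-, h⟩ | ⟨-, h⟩
  · exact h
  · exact mem_petersenEdges_of_mem_dirD _ _ h
  · exact Sym2.eq_swap ▸ mem_petersenEdges_of_mem_dirD _ _ h

def G.toPetersen (n : ℕ) : G n →g petersenGraph where
  toFun := Prod.snd
  map_rel' h := by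
    have hmem := mem_petersenEdges_of_G_adj h
    exact ⟨hmem, fun heq ↦ petersen_irrefl _ (heq ▸ hmem)⟩

theorem G_cliqueFree_three (n : ℕ) : (G n).CliqueFree 3 :=
  petersenGraph_cliqueFree_three.of_hom (G.toPetersen n)

/-- **Theorem 3.3 (girth).** For every `n ≥ 3`, the girth of `G n` equals 4. -/
theorem Gn_girth_eq_four (n : ℕ) (hn : 3 ≤ n) : (G n).girth = 4 := by
  have : Fact (1 < n) := ⟨by omega⟩
  have hup : (G n).egirth ≤ 4 :=
    egirth_le_four (G_adj_of_mem_petersenEdges 0 (x := 0) (y := 1) (by decide))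
      (G_adj_succ_of_mem_dirD 0 (x := 1) (y := 2) (by decide))
      (G_adj_of_mem_petersenEdges (0 + 1) (x := 2) (y := 1) (by decide))
      (G_adj_succ_of_mem_dirD 0 (x := 0) (y := 1) (by decide)).symm
      (by simp) (by simp)
  have hlow := four_le_egirth_of_cliqueFree_three (G_cliqueFree_three n)
  simp [girth, le_antisymm hup hlow]
end

section
/- For every n ∈ {3, 4, 5, 6, 7}, the graph G_n is not strongly regular: there exist no natural numbers ℓ and μ such that G_n is strongly regular with parameters (10n, 6, ℓ, μ), i.e., such that G_n has 10n vertices, is 6-regular, every pair of adjacent vertices has exactly ℓ common neighbors, and every pair of distinct non-adjacent vertices has exactly μ common neighbors. -/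
open SimpleGraph

/-!
For `n ≥ 3` the layers `0`, `1` and `-1` of `ZMod n` are distinct, so a common neighbour of two
vertices `(0, y)`, `(0, z)` of layer `0` is a common Petersen neighbour in layer `0`, a common
`dirD`-successor in layer `1`, or a common `dirD`-predecessor in layer `-1`. The non-adjacent pairs
`(0, 0), (0, 2)` and `(0, 0), (0, 3)` then have one and two common neighbours respectively: the
second pair gains `(1, 4)` from the arcs `0 → 4` and `3 → 4`.
-/

open Finset

variable {n : ℕ}

lemma G_adj_zero_left_iff (y : Fin 10) (p : ZMod n × Fin 10) :
    (G n).Adj (0, y) p ↔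
      (p.1 = 0 ∧ s(y, p.2) ∈ petersenEdges) ∨ (p.1 = 1 ∧ (y, p.2) ∈ dirD) ∨
        (p.1 = -1 ∧ (p.2, y) ∈ dirD) := by
  simp [G, eq_comm, eq_neg_iff_add_eq_zero]

lemma ZMod.zero_one_neg_one_pairwise_ne (hn : 2 < n) :
    (0 : ZMod n) ≠ 1 ∧ (0 : ZMod n) ≠ -1 ∧ (1 : ZMod n) ≠ -1 := by
  have : Fact (1 < n) := ⟨by omega⟩
  have : Fact (2 < n) := ⟨hn⟩
  exact ⟨zero_ne_one, (neg_ne_zero.mpr one_ne_zero).symm, ZMod.neg_one_ne_one.symm⟩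

lemma G_adj_zero_zero_iff (hn : 2 < n) (y z : Fin 10) :
    (G n).Adj (0, y) (0, z) ↔ s(y, z) ∈ petersenEdges := by
  obtain ⟨h01, h0m, -⟩ := ZMod.zero_one_neg_one_pairwise_ne hn
  simp [G_adj_zero_left_iff, h01, h0m]

lemma G_commonNeighbors_zero (hn : 2 < n) (y z : Fin 10) :
    (G n).commonNeighbors (0, y) (0, z) =
      ↑(({0} : Finset (ZMod n)) ×ˢ
            ({x | s(y, x) ∈ petersenEdges ∧ s(z, x) ∈ petersenEdges} : Finset (Fin 10)) ∪
          ({1} : Finset (ZMod n)) ×ˢ ({x | (y, x) ∈ dirD ∧ (z, x) ∈ dirD} : Finset (Fin 10)) ∪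
          ({-1} : Finset (ZMod n)) ×ˢ ({x | (x, y) ∈ dirD ∧ (x, z) ∈ dirD} : Finset (Fin 10))) := by
  obtain ⟨h01, h0m, h1m⟩ := ZMod.zero_one_neg_one_pairwise_ne hn
  ext ⟨i, x⟩
  simp only [mem_commonNeighbors, G_adj_zero_left_iff, coe_union, coe_product, coe_singleton,
    coe_filter, Set.mem_union, Set.mem_prod, Set.mem_singleton_iff, Set.mem_ofPred_eq, mem_univ,
    true_and]
  grind

lemma card_G_commonNeighbors_zero (hn : 2 < n) (y z : Fin 10) :
    Nat.card ((G n).commonNeighbors (0, y) (0, z)) =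
      #{x | s(y, x) ∈ petersenEdges ∧ s(z, x) ∈ petersenEdges} +
        #{x | (y, x) ∈ dirD ∧ (z, x) ∈ dirD} + #{x | (x, y) ∈ dirD ∧ (x, z) ∈ dirD} := by
  obtain ⟨h01, h0m, h1m⟩ := ZMod.zero_one_neg_one_pairwise_ne hn
  rw [G_commonNeighbors_zero hn, Nat.card_coe_set_eq, Set.ncard_coe_finset,
    card_union_of_disjoint, card_union_of_disjoint]
  · simp only [card_product, card_singleton, one_mul]
  · exact disjoint_product.mpr (.inl (disjoint_singleton.mpr h01))
  · exact disjoint_union_left.mpr ⟨disjoint_product.mpr (.inl (disjoint_singleton.mpr h0m)),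
      disjoint_product.mpr (.inl (disjoint_singleton.mpr h1m))⟩

/-- For every `n ∈ {3, 4, 5, 6, 7}`, the graph `G n` is not strongly regular: there are no
natural numbers `ℓ`, `μ` such that `G n` has `10 n` vertices, is 6-regular, every pair of
adjacent vertices has exactly `ℓ` common neighbors, and every pair of distinct non-adjacent
vertices has exactly `μ` common neighbors. -/
theorem Gn_not_strongly_regular :
    ∀ n ∈ ({3, 4, 5, 6, 7} : Set ℕ),
      ¬ ∃ ℓ μ : ℕ,
          Nat.card (ZMod n × Fin 10) = 10 * n ∧
          (∀ v : ZMod n × Fin 10, Nat.card ((G n).neighborSet v) = 6) ∧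
          (∀ u v : ZMod n × Fin 10, (G n).Adj u v →
            Nat.card ((G n).commonNeighbors u v) = ℓ) ∧
          (∀ u v : ZMod n × Fin 10, u ≠ v → ¬ (G n).Adj u v →
            Nat.card ((G n).commonNeighbors u v) = μ) := by
  rintro n hn ⟨ℓ, μ, -, -, -, hμ⟩
  have h2n : 2 < n := by
    simp only [Set.mem_insert_iff, Set.mem_singleton_iff] at hn
    omega
  have hμ₁ : μ = 1 := by
    rw [← hμ (0, 0) (0, 2) (by simp) (by rw [G_adj_zero_zero_iff h2n]; decide),
      card_G_commonNeighbors_zero h2n]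
    decide
  have hμ₂ : μ = 2 := by
    rw [← hμ (0, 0) (0, 3) (by simp) (by rw [G_adj_zero_zero_iff h2n]; decide),
      card_G_commonNeighbors_zero h2n]
    decide
  omega
end
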